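/- arXiv:math/0209072 — 8 statements merged into one kernel-verified Lean document; each statement's English description precedes it below -/
import Mathlib

section
/- If x and y are positive real numbers with x ≠ y and x^y = y^x, then there exists a real t ≠ 1, t > 0, such that x = t^(1/(t-1)) and y = t^(t/(t-1)). -/
open Real

lemma sub_one_mul_log_eq_log_div_of_rpow_eq_rpow {x y : ℝ} (hx : 0 < x) (hy : 0 < y)
    (h : x ^ y = y ^ x) : (y / x - 1) * log x = log (y / x) := by
  have hlog : y * log x = x * log y := by
    simpa only [log_rpow hx, log_rpow hy] using congrArg log h
  rw [log_div hy.ne' hx.ne']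
  field_simp
  linarith

lemma eq_rpow_one_div_sub_one_of_sub_one_mul_log_eq {x t : ℝ} (hx : 0 < x) (ht : 0 < t)
    (ht1 : t ≠ 1) (h : (t - 1) * log x = log t) : x = t ^ (1 / (t - 1)) := by
  rw [rpow_def_of_pos ht, ← h, mul_one_div, mul_div_cancel_left₀ _ (sub_ne_zero.2 ht1),
    exp_log hx]

theorem stmt_1 (x y : ℝ) (hx : 0 < x) (hy : 0 < y) (hxy : x ≠ y)
    (h : x ^ y = y ^ x) :
    ∃ t : ℝ, 0 < t ∧ t ≠ 1 ∧ x = t ^ (1 / (t - 1)) ∧ y = t ^ (t / (t - 1)) := by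
  set t := y / x
  have ht : 0 < t := div_pos hy hx
  have ht1 : t ≠ 1 := div_ne_one_of_ne hxy.symm
  have hxt : x = t ^ (1 / (t - 1)) :=
    eq_rpow_one_div_sub_one_of_sub_one_mul_log_eq hx ht ht1
      (sub_one_mul_log_eq_log_div_of_rpow_eq_rpow hx hy h)
  refine ⟨t, ht, ht1, hxt, ?_⟩
  calc y = t * x := (div_mul_cancel₀ y hx.ne').symm
    _ = t ^ (1 : ℝ) * t ^ (1 / (t - 1)) := by rw [rpow_one, ← hxt]
    _ = t ^ (t / (t - 1)) := by
      rw [← rpow_add ht]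
      congr 1
      field_simp [sub_ne_zero.2 ht1]
      ring
end

section
/- The only solution of x^y = y^x in integers with 1 < x < y is (x,y) = (2,4). -/
/-!
Since `x ^ x ∣ x ^ y = y ^ x`, we get `x ∣ y`, say `y = x * (k + 1)` with `k ≥ 1`. Cancelling
`x ^ x` from `x ^ (x * (k + 1)) = x ^ x * (k + 1) ^ x` and taking `x`-th roots gives
`x ^ k = k + 1`. But `x ^ k = x * x ^ (k - 1) ≥ 2k`, so `k = 1` and `x = 2`.
-/

namespace Nat

theorem dvd_of_pow_eq_pow_swap {x y : ℕ} (hx : x ≠ 0) (hxy : x ≤ y) (h : x ^ y = y ^ x) :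
    x ∣ y :=
  (pow_dvd_pow_iff hx).mp (h ▸ pow_dvd_pow x hxy)

theorem pow_eq_add_one_of_pow_mul_eq {x k : ℕ} (hx : x ≠ 0)
    (h : x ^ (x * (k + 1)) = (x * (k + 1)) ^ x) : x ^ k = k + 1 := by
  have hcancel : x ^ x * (x ^ k) ^ x = x ^ x * (k + 1) ^ x := by
    rw [← pow_mul, ← pow_add, ← mul_pow, ← h]
    ring_nf
  exact pow_left_injective hx (Nat.eq_of_mul_eq_mul_left (by positivity) hcancel)

theorem eq_two_and_eq_one_of_pow_eq_add_one {x k : ℕ} (hx : 2 ≤ x) (hk : k ≠ 0)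
    (h : x ^ k = k + 1) : x = 2 ∧ k = 1 := by
  obtain ⟨j, rfl⟩ := exists_eq_succ_of_ne_zero hk
  have hj : j < x ^ j := Nat.lt_pow_self (by omega)
  have hsucc : x * x ^ j = j + 2 := by rw [← h, pow_succ']
  constructor <;> nlinarith

end Nat

theorem stmt_2 (x y : ℕ) (h1 : 1 < x) (h2 : x < y) (h : x ^ y = y ^ x) :
    x = 2 ∧ y = 4 := by
  obtain ⟨m, rfl⟩ := Nat.dvd_of_pow_eq_pow_swap (by omega) h2.le h
  obtain ⟨k, rfl⟩ : ∃ k, m = k + 1 := Nat.exists_eq_succ_of_ne_zero (by rintro rfl; omega)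
  have hk : k ≠ 0 := by rintro rfl; omega
  obtain ⟨rfl, rfl⟩ :=
    Nat.eq_two_and_eq_one_of_pow_eq_add_one h1 hk (Nat.pow_eq_add_one_of_pow_mul_eq (by omega) h)
  exact ⟨rfl, rfl⟩
end

section
/- If x and y are positive rational numbers with x < y and x^y = y^x, then there exists a positive integer n such that x = (1 + 1/n)^n and y = (1 + 1/n)^(n+1). -/
/-! Put `s = y / x - 1 > 0`. Raising `x ^ y = y ^ x` to the power `1 / x` gives `x ^ (y / x) = y`,
i.e. `x ^ s = 1 + s`; writing `s = a / d` in lowest terms, `x ^ a = (1 + s) ^ d` with `a, d`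
coprime, so `x = c ^ d` and `1 + s = c ^ a` for a rational `c > 1`. Comparing numerators and
denominators of `1 + s = c ^ a` gives `c.num ^ a = c.den ^ a + a`, which is impossible for `a ≥ 2`
since then already `(c.den + 1) ^ a > c.den ^ a + a`. Hence `a = 1`, `c = 1 + 1 / d`, `x = c ^ d`
and `y = (1 + s) x = c ^ (d + 1)`. -/

theorem Real.rpow_div_sub_one_eq_div_of_rpow_eq_rpow {x y : ℝ} (hx : 0 < x) (hy : 0 < y)
    (h : x ^ y = y ^ x) : x ^ (y / x - 1) = y / x := by
  have hxy : x ^ (y / x) = y := by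
    rw [div_eq_mul_inv, Real.rpow_mul hx.le, h, ← Real.rpow_mul hy.le, mul_inv_cancel₀ hx.ne',
      Real.rpow_one]
  rw [Real.rpow_sub hx, Real.rpow_one, hxy]

theorem Real.rpow_ratCast_pow_den {x : ℝ} (hx : 0 ≤ x) {q : ℚ} (hq : 0 ≤ q) :
    (x ^ (q : ℝ)) ^ q.den = x ^ q.num.natAbs := by
  have hnum : (q * q.den : ℝ) = q.num.natAbs := by
    rw [Nat.cast_natAbs, abs_of_nonneg (Rat.num_nonneg.2 hq)]
    exact_mod_cast Rat.mul_den_eq_num q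
  rw [← Real.rpow_natCast, ← Real.rpow_mul hx, hnum, Real.rpow_natCast]

theorem exists_nonneg_eq_pow_of_pow_eq_pow_of_coprime {K : Type*} [Field K] [LinearOrder K]
    [IsStrictOrderedRing K] {a b : K} {m n : ℕ} (ha : 0 ≤ a) (hb : 0 ≤ b) (hmn : m.Coprime n)
    (h : a ^ m = b ^ n) : ∃ c, 0 ≤ c ∧ a = c ^ n ∧ b = c ^ m := by
  obtain ⟨c, rfl, rfl⟩ := (pow_eq_pow_iff_of_coprime hmn).1 h
  exact ⟨|c|, abs_nonneg c, by rw [← abs_pow, abs_of_nonneg ha],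
    by rw [← abs_pow, abs_of_nonneg hb]⟩

theorem Nat.pow_add_lt_add_one_pow {q a : ℕ} (hq : 1 ≤ q) (ha : 2 ≤ a) :
    q ^ a + a < (q + 1) ^ a := by
  induction a, ha using Nat.le_induction with
  | base => nlinarith
  | succ a ha ih =>
    have : 1 ≤ (q + 1) ^ a := Nat.one_le_pow _ _ (by omega)
    calc q ^ (a + 1) + (a + 1) ≤ q * (q ^ a + a) + 1 := by rw [pow_succ]; nlinarith
      _ < q * (q + 1) ^ a + 1 := by nlinarith
      _ ≤ (q + 1) ^ (a + 1) := by rw [pow_succ]; nlinarith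

theorem Nat.eq_one_of_pow_eq_pow_add {p q a : ℕ} (hq : 1 ≤ q) (ha : a ≠ 0)
    (h : p ^ a = q ^ a + a) : a = 1 := by
  by_contra ha1
  have hqp : q < p := (Nat.pow_lt_pow_iff_left ha).1 (by omega)
  have : (q + 1) ^ a ≤ p ^ a := Nat.pow_le_pow_left hqp a
  have := Nat.pow_add_lt_add_one_pow hq (by omega : 2 ≤ a)
  omega

theorem Rat.intCast_add_num (n : ℤ) (q : ℚ) : (n + q).num = n * q.den + q.num := by
  have h := Rat.mul_den_eq_num (n + q)
  rw [Rat.intCast_add_den, add_mul, Rat.mul_den_eq_num] at h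
  exact_mod_cast h.symm

theorem Rat.eq_one_add_inv_den_of_one_add_eq_pow {s c : ℚ} (hs : 0 < s) (hc : 0 ≤ c)
    (h : 1 + s = c ^ s.num.natAbs) : s.num.natAbs = 1 ∧ c = 1 + 1 / s.den := by
  set A := s.num.natAbs with hA_def
  have hA : A ≠ 0 := Int.natAbs_ne_zero.2 (Rat.num_ne_zero.2 hs.ne')
  have hc1 : 1 < c := (one_lt_pow_iff_of_nonneg hc hA).1 (by linarith)
  have hden : s.den = c.den ^ A := by
    rw [← Rat.den_pow, ← h]
    simp
  have hnum : c.num.natAbs ^ A = c.den ^ A + A := by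
    have := Rat.intCast_add_num 1 s
    rw [Int.cast_one, h, Rat.num_pow, one_mul, hden] at this
    zify
    push_cast at this
    rw [abs_of_pos (Rat.num_pos.2 (by linarith)), this, hA_def, Int.natCast_natAbs,
      abs_of_pos (Rat.num_pos.2 hs)]
  have hA1 : A = 1 := Nat.eq_one_of_pow_eq_pow_add c.pos hA hnum
  refine ⟨hA1, ?_⟩
  have hcnum : c.num = c.den + 1 := by
    zify at hnum
    simpa [hA1, abs_of_pos (Rat.num_pos.2 (by linarith : 0 < c))] using hnum
  rw [hden, hA1, pow_one]
  nth_rw 1 [← Rat.num_div_den c]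
  rw [hcnum]
  push_cast
  field_simp

theorem stmt_3 (x y : ℚ) (hx : 0 < x) (hxy : x < y)
    (h : (x : ℝ) ^ (y : ℝ) = (y : ℝ) ^ (x : ℝ)) :
    ∃ n : ℕ, 0 < n ∧ x = (1 + 1 / (n : ℚ)) ^ n ∧ y = (1 + 1 / (n : ℚ)) ^ (n + 1) := by
  have hy : 0 < y := hx.trans hxy
  set s : ℚ := y / x - 1 with hs_def
  have hs : 0 < s := sub_pos.2 ((one_lt_div hx).2 hxy)
  have hpow : x ^ s.num.natAbs = (1 + s) ^ s.den := by
    have hrpow : (x : ℝ) ^ (s : ℝ) = (y : ℝ) / x := by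
      push_cast [hs_def]
      exact Real.rpow_div_sub_one_eq_div_of_rpow_eq_rpow (by positivity) (by positivity) h
    have hden := Real.rpow_ratCast_pow_den (x := x) (by positivity) hs.le
    rw [hrpow] at hden
    rw [add_sub_cancel]
    exact_mod_cast hden.symm
  obtain ⟨c, hc, hxc, hsc⟩ :=
    exists_nonneg_eq_pow_of_pow_eq_pow_of_coprime hx.le (by positivity) s.reduced hpow
  obtain ⟨hA, rfl⟩ := Rat.eq_one_add_inv_den_of_one_add_eq_pow hs hc hsc
  refine ⟨s.den, s.pos, hxc, ?_⟩
  calc y = x * (1 + s) := by rw [hs_def]; field_simp; ring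
    _ = _ := by rw [hxc, hsc, hA, pow_one, pow_succ]
end

section
/- For every positive integer n, the pair x = (1 + 1/n)^n, y = (1 + 1/n)^(n+1) consists of rational numbers satisfying x^y = y^x. -/
/-! Writing `a = 1 + 1/t`, both numbers are powers of `a`, and `(a ^ s) ^ (a ^ r) = (a ^ r) ^ (a ^ s)`
reduces to the exponent identity `s * a ^ r = r * a ^ s`. For `s = t`, `r = t + 1` this is
`a ^ (t + 1) = a ^ t * a` together with `t * a = t + 1`. -/

open Real

theorem Real.rpow_rpow_comm_of_mul_eq {a s r : ℝ} (ha : 0 ≤ a) (h : s * a ^ r = r * a ^ s) :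
    (a ^ s) ^ (a ^ r) = (a ^ r) ^ (a ^ s) := by
  rw [← rpow_mul ha, ← rpow_mul ha, h]

theorem Real.one_add_one_div_rpow_rpow_comm {t : ℝ} (ht : 0 < t) :
    ((1 + 1 / t) ^ t) ^ ((1 + 1 / t) ^ (t + 1)) =
      ((1 + 1 / t) ^ (t + 1)) ^ ((1 + 1 / t) ^ t) := by
  have ha : 0 < 1 + 1 / t := by positivity
  refine rpow_rpow_comm_of_mul_eq ha.le ?_
  have hta : t * (1 + 1 / t) = t + 1 := by field_simp
  rw [rpow_add ha, rpow_one, ← hta]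
  ring

theorem stmt_4 (n : ℕ) (hn : 0 < n) :
    ∃ x y : ℚ, x = (1 + 1 / (n : ℚ)) ^ n ∧ y = (1 + 1 / (n : ℚ)) ^ (n + 1) ∧
      (x : ℝ) ^ (y : ℝ) = (y : ℝ) ^ (x : ℝ) := by
  refine ⟨_, _, rfl, rfl, ?_⟩
  have h := one_add_one_div_rpow_rpow_comm (t := n) (by exact_mod_cast hn)
  rw [← Nat.cast_add_one, rpow_natCast, rpow_natCast] at h
  push_cast
  exact h
end

section
/- Let m be a positive integer such that the 2-adic valuation ν₂(m) is odd, and let k ≥ 2 be even. Then there are no coprime positive integers a, b with |a - b| = k such that, writing d = gcd(b,m), b = d·b', m = d·m', both a·m' and b' are k-th powers of integers. -/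
/-!
Two coprime integers at even distance are both odd, so `d = gcd(b, m)` is odd as well.
Hence `ν₂(m) = ν₂(d m') = ν₂(m') = ν₂(a m') = ν₂(uᵏ) = k ν₂(u)`, which is even.
-/

theorem Nat.Coprime.odd_and_odd_of_even_natAbs_sub {a b : ℕ} (hab : a.Coprime b)
    (heven : Even ((a : ℤ) - b).natAbs) : Odd a ∧ Odd b := by
  have hparity : Even a ↔ Even b := by
    simpa only [Int.natAbs_even, Int.even_sub, Int.even_coe_nat] using heven
  have ha : ¬ Even a := fun ha => by
    have h2 : 2 ∣ a.gcd b := Nat.dvd_gcd ha.two_dvd (hparity.mp ha).two_dvd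
    rw [hab] at h2
    omega
  exact ⟨Nat.not_even_iff_odd.mp ha, Nat.not_even_iff_odd.mp (mt hparity.mpr ha)⟩

theorem padicValNat_mul_of_not_dvd_left {p d n : ℕ} [Fact p.Prime] (hd : ¬ p ∣ d) :
    padicValNat p (d * n) = padicValNat p n := by
  rcases eq_or_ne n 0 with rfl | hn
  · simp
  have hd0 : d ≠ 0 := by rintro rfl; exact hd (dvd_zero p)
  rw [padicValNat.mul hd0 hn, padicValNat.eq_zero_of_not_dvd hd, zero_add]

theorem even_padicValNat_pow {p k : ℕ} [Fact p.Prime] (u : ℕ) (hk : Even k) :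
    Even (padicValNat p (u ^ k)) :=
  padicValNat.pow (p := p) u k ▸ hk.mul_right _

theorem stmt_11_general (m k : ℕ) (hv : Odd (padicValNat 2 m))
    (hke : Even k) :
    ¬ ∃ a b b' m' u v : ℕ, 0 < a ∧ 0 < b ∧ Nat.Coprime a b ∧
        ((a : ℤ) - (b : ℤ)).natAbs = k ∧
        b = Nat.gcd b m * b' ∧ m = Nat.gcd b m * m' ∧
        a * m' = u ^ k ∧ b' = v ^ k := by
  rintro ⟨a, b, b', m', u, v, -, -, hcop, habs, -, hm', hu, -⟩
  obtain ⟨ha, hb⟩ := hcop.odd_and_odd_of_even_natAbs_sub (habs ▸ hke)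
  have hd : ¬ 2 ∣ Nat.gcd b m := fun h => hb.not_two_dvd_nat (h.trans (Nat.gcd_dvd_left b m))
  have hval : padicValNat 2 m = padicValNat 2 (u ^ k) := by
    rw [hm', padicValNat_mul_of_not_dvd_left hd,
      ← padicValNat_mul_of_not_dvd_left ha.not_two_dvd_nat, hu]
  rw [hval] at hv
  exact Nat.not_even_iff_odd.mpr hv (even_padicValNat_pow u hke)

theorem stmt_11 (m k : ℕ) (hm : 0 < m) (hv : Odd (padicValNat 2 m))
    (hk2 : 2 ≤ k) (hke : Even k) :
    ¬ ∃ a b b' m' u v : ℕ, 0 < a ∧ 0 < b ∧ Nat.Coprime a b ∧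
        ((a : ℤ) - (b : ℤ)).natAbs = k ∧
        b = Nat.gcd b m * b' ∧ m = Nat.gcd b m * m' ∧
        a * m' = u ^ k ∧ b' = v ^ k :=
  stmt_11_general m k hv hke
end

section
/- If p ≡ 3 (mod 4) is prime, then exactly one of the equations x² - p y² = 2 and x² - p y² = -2 has a solution in integers x, y. -/
/-!
Let `(X, Y)` be the fundamental solution of `X² - p Y² = 1`. If `X` were odd, then `Y` would be
even and `k (k + 1) = p (Y / 2)²` with `X = 2k + 1`; the coprime factors are a square and `p`
times a square, which gives either `b² - p c² = -1` (impossible modulo `4`) or a solution `(b, c)`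
of the Pell equation with `1 < |b| < X`. So `X` is even, and splitting the coprime factors of
`(X - 1)(X + 1) = p Y²` the same way solves `b² - p c² = ±2`. Both signs cannot occur, since
`x² ≡ 2` and `u² ≡ -2` modulo `p` would make `-1` a square modulo `p`.
-/

namespace Int

theorem exists_sq_of_isCoprime_of_mul_eq_sq {u v z : ℤ} (hu : 0 ≤ u) (huv : IsCoprime u v)
    (h : u * v = z ^ 2) : ∃ a, u = a ^ 2 := by
  obtain ⟨a, ha | ha⟩ := Int.sq_of_isCoprime huv h
  · exact ⟨a, ha⟩
  · exact ⟨0, by nlinarith [sq_nonneg a]⟩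

theorem sq_and_prime_mul_sq_of_mul_eq_prime_mul_sq {p : ℕ} (hp : p.Prime) {u v z : ℤ}
    (hu : 0 ≤ u) (hv : 0 ≤ v) (huv : IsCoprime u v) (h : u * v = p * z ^ 2) :
    (∃ b c, u = b ^ 2 ∧ v = p * c ^ 2) ∨ (∃ b c, u = p * c ^ 2 ∧ v = b ^ 2) := by
  wlog hpu : (p : ℤ) ∣ u generalizing u v
  · have hpv : (p : ℤ) ∣ v :=
      ((Nat.prime_iff_prime_int.mp hp).dvd_mul.mp ⟨z ^ 2, h⟩).resolve_left hpu
    obtain ⟨b, c, hv, hu⟩ | ⟨b, c, hv, hu⟩ := this hv hu huv.symm (by rw [mul_comm, h]) hpv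
    · exact Or.inr ⟨b, c, hu, hv⟩
    · exact Or.inl ⟨b, c, hu, hv⟩
  obtain ⟨u', rfl⟩ := hpu
  have hp0 : (0 : ℤ) < p := by exact_mod_cast hp.pos
  have hu' : u' * v = z ^ 2 := mul_left_cancel₀ hp0.ne' (by rw [← mul_assoc, h])
  have huv' : IsCoprime u' v := huv.of_isCoprime_of_dvd_left (dvd_mul_left u' p)
  obtain ⟨c, rfl⟩ :=
    exists_sq_of_isCoprime_of_mul_eq_sq (nonneg_of_mul_nonneg_right hu hp0) huv' hu'
  obtain ⟨b, rfl⟩ := exists_sq_of_isCoprime_of_mul_eq_sq hv huv'.symm (by rw [mul_comm, hu'])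
  exact Or.inr ⟨b, c, rfl, rfl⟩

theorem isCoprime_sub_one_add_one_of_even {x : ℤ} (hx : Even x) : IsCoprime (x - 1) (x + 1) := by
  obtain ⟨k, rfl⟩ := hx
  exact ⟨k, 1 - k, by ring⟩

theorem even_of_sq_sub_mul_sq_eq_one {d x y : ℤ} (hd : d % 4 = 3) (h : x ^ 2 - d * y ^ 2 = 1)
    (hx : Odd x) : Even y := by
  by_contra hy
  obtain ⟨k, rfl⟩ := hx
  obtain ⟨m, rfl⟩ := Int.not_even_iff_odd.mp hy
  have : d = 4 * (k ^ 2 + k - d * (m ^ 2 + m)) := by linear_combination -h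
  omega

theorem sq_sub_mul_sq_ne_neg_one {d : ℤ} (hd : d % 4 = 3) (b c : ℤ) :
    b ^ 2 - d * c ^ 2 ≠ -1 := by
  intro h
  obtain ⟨q, rfl⟩ : ∃ q, d = 4 * q + 3 := ⟨d / 4, by omega⟩
  have h4 := congrArg (Int.cast : ℤ → ZMod 4) h
  push_cast at h4
  revert h4
  generalize (b : ZMod 4) = B
  generalize (c : ZMod 4) = C
  generalize (q : ZMod 4) = Q
  revert B C Q
  decide

end Int

theorem not_exists_sq_sub_prime_mul_sq_eq_two_and_neg_two {p : ℕ} (hp : p.Prime)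
    (h3 : p % 4 = 3) :
    ¬((∃ x y : ℤ, x ^ 2 - p * y ^ 2 = 2) ∧ ∃ u v : ℤ, u ^ 2 - p * v ^ 2 = -2) := by
  rintro ⟨⟨x, y, hxy⟩, u, v, huv⟩
  have : Fact p.Prime := ⟨hp⟩
  have hx : (x : ZMod p) ^ 2 = 2 := by
    simpa using congrArg (Int.cast : ℤ → ZMod p) hxy
  have hu : (u : ZMod p) ^ 2 = -2 := by
    simpa using congrArg (Int.cast : ℤ → ZMod p) huv
  have h2 : (2 : ZMod p) ≠ 0 := by
    intro h2
    have := Nat.le_of_dvd two_pos ((ZMod.natCast_eq_zero_iff 2 p).mp (by exact_mod_cast h2))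
    omega
  have hx0 : (x : ZMod p) ≠ 0 := fun h0 => h2 (by rw [← hx, h0]; ring)
  refine ZMod.exists_sq_eq_neg_one_iff.mp ⟨(u : ZMod p) / (x : ZMod p), ?_⟩ h3
  field_simp
  linear_combination -hu - hx

namespace Pell.IsFundamental

theorem even_x {p : ℕ} (hp : p.Prime) (h3 : p % 4 = 3) {a : Solution₁ (p : ℤ)}
    (ha : IsFundamental a) : Even a.x := by
  have h3' : (p : ℤ) % 4 = 3 := by omega
  by_contra hodd
  rw [Int.not_even_iff_odd] at hodd
  obtain ⟨m, hm⟩ := Int.even_of_sq_sub_mul_sq_eq_one h3' a.prop hodd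
  obtain ⟨k, hk⟩ := hodd
  have hk0 : 0 < k := by linarith [ha.1]
  have hfac : k * (k + 1) = p * m ^ 2 := by
    have := a.prop
    rw [hk, hm] at this
    linarith
  obtain ⟨b, c, hb, hc⟩ | ⟨b, c, hc, hb⟩ :=
    Int.sq_and_prime_mul_sq_of_mul_eq_prime_mul_sq hp hk0.le (by linarith) ⟨-1, 1, by ring⟩ hfac
  · exact Int.sq_sub_mul_sq_ne_neg_one h3' b c (by linarith)
  · have hb1 : 1 < |b| := by nlinarith [sq_abs b, abs_nonneg b]
    have hle := ha.x_le_x (a := Solution₁.mk |b| c (by rw [sq_abs]; linarith)) hb1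
    rw [Solution₁.x_mk] at hle
    nlinarith [sq_abs b]

end Pell.IsFundamental

theorem exists_sq_sub_prime_mul_sq_eq_two_or_neg_two {p : ℕ} (hp : p.Prime)
    (h3 : p % 4 = 3) :
    (∃ x y : ℤ, x ^ 2 - p * y ^ 2 = 2) ∨ (∃ x y : ℤ, x ^ 2 - p * y ^ 2 = -2) := by
  obtain ⟨a, ha⟩ := Pell.IsFundamental.exists_of_not_isSquare (by exact_mod_cast hp.pos)
    (Nat.prime_iff_prime_int.mp hp).not_isSquare
  have hfac : (a.x - 1) * (a.x + 1) = p * a.y ^ 2 := by linear_combination a.prop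
  obtain ⟨b, c, h1, h2⟩ | ⟨b, c, h1, h2⟩ :=
    Int.sq_and_prime_mul_sq_of_mul_eq_prime_mul_sq hp (by linarith [ha.1]) (by linarith [ha.1])
    (Int.isCoprime_sub_one_add_one_of_even (ha.even_x hp h3)) hfac
  · exact Or.inr ⟨b, c, by linarith⟩
  · exact Or.inl ⟨b, c, by linarith⟩

theorem stmt_13 (p : ℕ) (hp : p.Prime) (h3 : p % 4 = 3) :
    Xor' (∃ x y : ℤ, x ^ 2 - (p : ℤ) * y ^ 2 = 2)
         (∃ x y : ℤ, x ^ 2 - (p : ℤ) * y ^ 2 = -2) := by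
  exact (xor_iff_or_and_not_and _ _).mpr ⟨exists_sq_sub_prime_mul_sq_eq_two_or_neg_two hp h3,
    not_exists_sq_sub_prime_mul_sq_eq_two_and_neg_two hp h3⟩
end

section
/- The only solution in positive integers to x³ - 3y³ = 3 is (x,y) = (3,2). -/
theorem stmt_16 (x y : ℤ) (hx : 0 < x) (hy : 0 < y)
    (h : x ^ 3 - 3 * y ^ 3 = 3) : x = 3 ∧ y = 2 := by
  -- Step 1: 3 ∣ x
  have h3x : (3 : ℤ) ∣ x := by
    have hd : (3 : ℤ) ∣ x ^ 3 := ⟨1 + y ^ 3, by linarith⟩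
    exact Int.Prime.dvd_pow' (by norm_num) hd
  obtain ⟨a, rfl⟩ := h3x
  have ha : 0 < a := by linarith
  have ha9 : 9 * a ^ 3 = y ^ 3 + 1 := by nlinarith [h]
  -- Step 2: y ≡ 2 (mod 3)
  have hy2 : (3 : ℤ) ∣ y - 2 := by
    have hz : ((y : ZMod 3)) ^ 3 + 1 = 0 := by
      have := congrArg (fun n : ℤ => (n : ZMod 3)) ha9
      push_cast at this
      rw [show ((9 : ZMod 3)) = 0 by decide] at this
      simpa using this.symm
    have : ((y - 2 : ℤ) : ZMod 3) = 0 := by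
      push_cast
      revert hz
      generalize ((y : ℤ) : ZMod 3) = t
      revert t
      decide
    exact (ZMod.intCast_zmod_eq_zero_iff_dvd _ 3).mp this
  obtain ⟨j, hj⟩ : ∃ j : ℤ, y = 3 * j + 2 := by
    obtain ⟨j, hj⟩ := hy2; exact ⟨j, by linarith⟩
  subst hj
  have hj0 : 0 ≤ j := by omega
  -- Step 3: factorization a^3 = (3j^2+3j+1)(j+1), coprime factors
  have key : (3 * j ^ 2 + 3 * j + 1) * (j + 1) = a ^ 3 := by nlinarith [ha9]
  have hcop : IsCoprime (3 * j ^ 2 + 3 * j + 1) (j + 1) := ⟨1, -3 * j, by ring⟩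
  obtain ⟨t, ht⟩ := exists_associated_pow_of_mul_eq_pow' hcop key
  rw [Int.associated_iff] at ht
  have ht' : ∃ t : ℤ, t ^ 3 = 3 * j ^ 2 + 3 * j + 1 := by
    rcases ht with ht | ht
    · exact ⟨t, ht⟩
    · exact ⟨-t, by rw [show (-t) ^ 3 = -(t^3) by ring, ht]; ring⟩
  obtain ⟨t, ht⟩ := ht'
  -- Step 4: t^3 + j^3 = (j+1)^3, so FLT3 forces j = 0
  have hflt : FermatLastTheoremWith ℤ 3 :=
    fermatLastTheoremFor_iff_int.mp fermatLastTheoremThree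
  have hj' : j = 0 := by
    by_contra hne
    have hjpos : 0 < j := lt_of_le_of_ne hj0 (Ne.symm hne)
    have htne : t ≠ 0 := by
      intro h0
      rw [h0] at ht
      nlinarith
    have : t ^ 3 + j ^ 3 = (j + 1) ^ 3 := by rw [ht]; ring
    exact hflt t j (j + 1) htne hne (by positivity) this
  subst hj'
  -- Step 5: conclude a = 1
  have ha1 : a = 1 := by nlinarith [ha9, sq_nonneg (a - 1), sq_nonneg (a + 1)]
  constructor
  · rw [ha1]; ring
  · ring
end

section
/- Define v_n, w_n by v_n + w_n√3 = (1 + √3)(2 + √3)^n for n ≥ 0. Then for every n ≥ 0, the pair x = (3w_n/v_n)^(v_n²), y = (3w_n/v_n)^(3w_n²) consists of positive rationals satisfying x^y = y^(3x). -/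
theorem stmt_19 (v w : ℕ → ℕ) (hv0 : v 0 = 1) (hw0 : w 0 = 1)
    (hv : ∀ n, v (n + 1) = 2 * v n + 3 * w n)
    (hw : ∀ n, w (n + 1) = v n + 2 * w n) :
    ∀ n : ℕ, ∃ x y : ℚ,
      x = ((3 * (w n : ℚ)) / (v n : ℚ)) ^ ((v n) ^ 2) ∧
      y = ((3 * (w n : ℚ)) / (v n : ℚ)) ^ (3 * (w n) ^ 2) ∧
      0 < x ∧ 0 < y ∧
      (x : ℝ) ^ (y : ℝ) = (y : ℝ) ^ (3 * (x : ℝ)) := by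
  have key : ∀ n, 0 < v n ∧ 0 < w n ∧ 3 * (w n) ^ 2 = (v n) ^ 2 + 2 := by
    intro n
    induction n with
    | zero => simp [hv0, hw0]
    | succ k ih =>
      obtain ⟨h1, h2, h3⟩ := ih
      refine ⟨?_, ?_, ?_⟩
      · rw [hv]; omega
      · rw [hw]; omega
      · rw [hv, hw]; ring_nf; ring_nf at h3; omega
  intro n
  obtain ⟨hvp, hwp, hk⟩ := key n
  set q : ℚ := (3 * (w n : ℚ)) / (v n : ℚ) with hqdef
  have hvQ : (0:ℚ) < (v n : ℚ) := by exact_mod_cast hvp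
  have hwQ : (0:ℚ) < (w n : ℚ) := by exact_mod_cast hwp
  have hq : 0 < q := by rw [hqdef]; positivity
  refine ⟨q ^ ((v n) ^ 2), q ^ (3 * (w n) ^ 2), rfl, rfl, pow_pos hq _, pow_pos hq _, ?_⟩
  have hexp : ((v n : ℚ)) ^ 2 * q ^ (3 * (w n) ^ 2)
      = 9 * (w n : ℚ) ^ 2 * q ^ ((v n) ^ 2) := by
    rw [hk, pow_add]
    have hq2 : ((v n : ℚ)) ^ 2 * q ^ 2 = 9 * (w n : ℚ) ^ 2 := by
      rw [hqdef]
      field_simp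
      ring
    calc ((v n : ℚ)) ^ 2 * (q ^ ((v n) ^ 2) * q ^ 2)
        = ((v n : ℚ)) ^ 2 * q ^ 2 * q ^ ((v n) ^ 2) := by ring
      _ = 9 * (w n : ℚ) ^ 2 * q ^ ((v n) ^ 2) := by rw [hq2]
  have hQ : (0:ℝ) < ((q : ℝ)) := by exact_mod_cast hq
  have hX : ((q ^ ((v n) ^ 2) : ℚ) : ℝ) = (q : ℝ) ^ ((v n) ^ 2) := by push_cast; ring
  have hY : ((q ^ (3 * (w n) ^ 2) : ℚ) : ℝ) = (q : ℝ) ^ (3 * (w n) ^ 2) := by push_cast; ring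
  rw [hX, hY, ← Real.rpow_natCast (q:ℝ) ((v n)^2), ← Real.rpow_natCast (q:ℝ) (3*(w n)^2),
    ← Real.rpow_mul hQ.le, ← Real.rpow_mul hQ.le]
  congr 1
  have hexpR : ((v n : ℝ)) ^ 2 * ((q:ℝ)) ^ (3 * (w n) ^ 2)
      = 9 * (w n : ℝ) ^ 2 * ((q:ℝ)) ^ ((v n) ^ 2) := by exact_mod_cast hexp
  rw [Real.rpow_natCast, Real.rpow_natCast]
  push_cast
  nlinarith [hexpR]
end
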